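/- Let G = U(2,1)(F/F₀) inside GL_3(F) with respect to the hermitian form with matrix J = adiag(1,1,1), let T be the diagonal torus of G and N the upper-triangular unipotent subgroup {(1,x,y;0,1,\bar{x};0,0,1) : y + \bar{y} = x\bar{x}}, and let \bar{N} be the lower-triangular unipotent subgroup. Let w_y = adiag(ϖ, 1, ϖ^{-1}) for a uniformizer ϖ of F₀. Then conjugation by w_y maps N into \bar{N}-direction correctly: for any subgroup J of G admitting a unique Iwahori decomposition J = (J ∩ \bar{N})(J ∩ T)(J ∩ N), if a character λ of J (trivial on J ∩ N and J ∩ \bar{N}) is intertwined by w_x = adiag(1,1,1), then it is intertwined by w_y. (Here g intertwines λ means λ(j) = λ(g^{-1}jg) for all j ∈ J ∩ gJg^{-1}.) -/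

import Mathlib

open Matrix

/-- The 3×3 antidiagonal matrix `adiag(a,b,c)`. -/
def adiag3 {F : Type*} [Field F] (a b c : F) : Matrix (Fin 3) (Fin 3) F :=
  !![0, 0, a; 0, b, 0; c, 0, 0]

/-- The unramified unitary group `U(2,1)(F/F₀)`, realised as the set of
matrices `g` with `g ⬝ J ⬝ σ(g)ᵀ ⬝ J = 1`, where `σ` is the Galois
conjugation and `J = adiag(1,1,1)`. -/
def U21 (F : Type*) [Field F] (σ : F ≃+* F) : Set (Matrix (Fin 3) (Fin 3) F) :=
  {g | g * adiag3 (1 : F) 1 1 * (g.map σ)ᵀ * adiag3 (1 : F) 1 1 = 1}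

/-- The diagonal torus `T = {diag(x, y, σ(x)⁻¹) : x ∈ F^×, y σ(y) = 1}`. -/
def torusT (F : Type*) [Field F] (σ : F ≃+* F) : Set (Matrix (Fin 3) (Fin 3) F) :=
  {g | ∃ x y : F, x ≠ 0 ∧ y * σ y = 1 ∧ g = Matrix.diagonal ![x, y, (σ x)⁻¹]}

/-- The upper-triangular unipotent subgroup
`N = {(1,x,y; 0,1,σx; 0,0,1) : y + σ(y) = x σ(x)}`. -/
def upperN (F : Type*) [Field F] (σ : F ≃+* F) : Set (Matrix (Fin 3) (Fin 3) F) :=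
  {g | ∃ x y : F, y + σ y = x * σ x ∧ g = !![1, x, y; 0, 1, σ x; 0, 0, 1]}

/-- The lower-triangular unipotent subgroup `N̄` of `U(2,1)`. -/
def lowerN (F : Type*) [Field F] (σ : F ≃+* F) : Set (Matrix (Fin 3) (Fin 3) F) :=
  {g | g ∈ U21 F σ ∧ (∀ i, g i i = 1) ∧ ∀ i j : Fin 3, i < j → g i j = 0}

/-! Write `j = b t a` with `b ∈ N`, `t ∈ T`, `a ∈ N̄`. Since `w_y² = 1`, conjugation by `w_y`
turns this into `w_y j w_y = (w_y b w_y) (w_y t w_y) (w_y a w_y)`, a factorisation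
lower-unitriangular × diagonal × upper-unitriangular, and `w_y t w_y = w_x t w_x`. The diagonal
factor of such a factorisation is unique, so it is the torus part of the Iwahori decomposition of
`w_y j w_y`. As `λ` only sees torus parts, `λ(w_y j w_y) = λ(w_x t w_x) = λ(t) = λ(j)`. -/

theorem mul_mul_conj_of_mul_self_eq_one {M : Type*} [Monoid M] {p : M} (hp : p * p = 1)
    (x y z : M) : p * (x * y * z) * p = (p * x * p) * (p * y * p) * (p * z * p) := by
  simp only [mul_assoc, ← mul_assoc p p, hp, one_mul]

theorem map_mul_mul_eq_of_eq_one {M N : Type*} [Mul M] [MulOneClass N] {J : Set M}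
    {f : M → N} (hf : ∀ a ∈ J, ∀ b ∈ J, f (a * b) = f a * f b)
    (hJ : ∀ a ∈ J, ∀ b ∈ J, a * b ∈ J) {x y z : M} (hx : x ∈ J) (hy : y ∈ J) (hz : z ∈ J)
    (hfx : f x = 1) (hfz : f z = 1) : f (x * y * z) = f y := by
  rw [hf _ (hJ x hx y hy) z hz, hf x hx y hy, hfx, hfz, one_mul, mul_one]

namespace Matrix

variable {n R : Type*}

def IsUnitUpperTriangular [Zero R] [One R] [LT n] (M : Matrix n n R) : Prop :=
  M.IsUpperTriangular ∧ ∀ i, M i i = 1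

def IsUnitLowerTriangular [Zero R] [One R] [LT n] (M : Matrix n n R) : Prop :=
  M.IsLowerTriangular ∧ ∀ i, M i i = 1

variable [Fintype n]

theorem BlockTriangular.mul_apply_self [NonUnitalNonAssocSemiring R] {α : Type*}
    [LinearOrder α] {b : n → α} (hb : Function.Injective b) {M N : Matrix n n R}
    (hM : M.BlockTriangular b) (hN : N.BlockTriangular b) (i : n) :
    (M * N) i i = M i i * N i i := by
  rw [mul_apply, Finset.sum_eq_single i]
  · intro k _ hki
    rcases lt_or_gt_of_ne (hb.ne hki) with hlt | hlt
    · rw [hM hlt, zero_mul]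
    · rw [hN hlt, mul_zero]
  · simp

theorem diagonal_eq_of_lower_mul_diagonal_mul_upper [LinearOrder n] [DecidableEq n]
    [CommRing R] {L L' U U' : Matrix n n R} {d d' : n → R}
    (hL : L.IsUnitLowerTriangular) (hL' : L'.IsUnitLowerTriangular)
    (hU : U.IsUnitUpperTriangular) (hU' : U'.IsUnitUpperTriangular)
    (h : L * diagonal d * U = L' * diagonal d' * U') : d = d' := by
  have : Invertible L' := L'.invertibleOfIsUnitDet <| by
    simp [det_of_isLowerTriangular L' hL'.1, hL'.2]
  have : Invertible U := U.invertibleOfIsUnitDet <| by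
    simp [det_of_isUpperTriangular hU.1, hU.2]
  set X := L'⁻¹ * L
  set Y := U' * U⁻¹
  have hX : X.IsLowerTriangular := (blockTriangular_inv_of_blockTriangular hL'.1).mul hL.1
  have hY : Y.IsUpperTriangular := hU'.1.mul (blockTriangular_inv_of_blockTriangular hU.1)
  have hX1 (i : n) : X i i = 1 := by
    have := hL'.1.mul_apply_self OrderDual.toDual.injective hX i
    rwa [mul_inv_cancel_left_of_invertible, hL.2, hL'.2, one_mul, eq_comm] at this
  have hY1 (i : n) : Y i i = 1 := by
    have := hY.mul_apply_self Function.injective_id hU.1 i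
    rwa [inv_mul_cancel_right_of_invertible, hU.2, hU'.2, mul_one, eq_comm] at this
  have hXY : X * diagonal d = diagonal d' * Y := by
    calc X * diagonal d = L'⁻¹ * (L * diagonal d * U) * U⁻¹ := by
          simp only [X, Matrix.mul_assoc, mul_inv_of_invertible, Matrix.mul_one]
      _ = L'⁻¹ * (L' * diagonal d' * U') * U⁻¹ := by rw [h]
      _ = diagonal d' * Y := by
          simp only [Y, Matrix.mul_assoc, inv_mul_cancel_left_of_invertible]
  funext i
  simpa [hX1, hY1] using congrFun (congrFun hXY i) i

end Matrix

section

variable {F : Type*} [Field F]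

theorem adiag3_mul_mul_adiag3_apply (p q r p' q' r' : F) (M : Matrix (Fin 3) (Fin 3) F)
    (i j : Fin 3) :
    (adiag3 p q r * M * adiag3 p' q' r') i j =
      ![p, q, r] i * M i.rev j.rev * ![r', q', p'] j := by
  fin_cases i <;> fin_cases j <;> simp [adiag3, mul_apply, Fin.sum_univ_three, vecMul, dotProduct]

theorem adiag3_mul_adiag3_self {ϖ : F} (hϖ : ϖ ≠ 0) : adiag3 ϖ 1 ϖ⁻¹ * adiag3 ϖ 1 ϖ⁻¹ = 1 := by
  ext i j
  fin_cases i <;> fin_cases j <;> simp [adiag3, mul_apply, Fin.sum_univ_three, hϖ]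

theorem adiag3_mul_diagonal_mul_adiag3 {ϖ : F} (hϖ : ϖ ≠ 0) (d : Fin 3 → F) :
    adiag3 ϖ 1 ϖ⁻¹ * diagonal d * adiag3 ϖ 1 ϖ⁻¹ = diagonal (d ∘ Fin.rev) := by
  ext i j
  fin_cases i <;> fin_cases j <;>
    simp [adiag3, mul_apply, Fin.sum_univ_three, vecMul, dotProduct] <;> field_simp

theorem Matrix.IsUnitUpperTriangular.adiag3_conj {ϖ : F} (hϖ : ϖ ≠ 0)
    {M : Matrix (Fin 3) (Fin 3) F} (hM : M.IsUnitUpperTriangular) :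
    (adiag3 ϖ 1 ϖ⁻¹ * M * adiag3 ϖ 1 ϖ⁻¹).IsUnitLowerTriangular := by
  refine ⟨fun i j hij => ?_, fun i => ?_⟩
  · have : M i.rev j.rev = 0 := hM.1 (Fin.rev_lt_rev.mpr (OrderDual.toDual_lt_toDual.mp hij))
    rw [adiag3_mul_mul_adiag3_apply, this, mul_zero, zero_mul]
  · rw [adiag3_mul_mul_adiag3_apply, hM.2]
    fin_cases i <;> simp [hϖ]

theorem Matrix.IsUnitLowerTriangular.adiag3_conj {ϖ : F} (hϖ : ϖ ≠ 0)
    {M : Matrix (Fin 3) (Fin 3) F} (hM : M.IsUnitLowerTriangular) :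
    (adiag3 ϖ 1 ϖ⁻¹ * M * adiag3 ϖ 1 ϖ⁻¹).IsUnitUpperTriangular := by
  refine ⟨fun i j hij => ?_, fun i => ?_⟩
  · have : M i.rev j.rev = 0 := hM.1 (OrderDual.toDual_lt_toDual.mpr (Fin.rev_lt_rev.mpr hij))
    rw [adiag3_mul_mul_adiag3_apply, this, mul_zero, zero_mul]
  · rw [adiag3_mul_mul_adiag3_apply, hM.2]
    fin_cases i <;> simp [hϖ]

variable (σ : F ≃+* F)

theorem exists_diagonal_of_mem_torusT {t : Matrix (Fin 3) (Fin 3) F} (ht : t ∈ torusT F σ) :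
    ∃ d, t = diagonal d := by
  obtain ⟨x, y, -, -, rfl⟩ := ht
  exact ⟨_, rfl⟩

theorem isUnitUpperTriangular_of_mem_upperN {b : Matrix (Fin 3) (Fin 3) F}
    (hb : b ∈ upperN F σ) : b.IsUnitUpperTriangular := by
  obtain ⟨x, y, -, rfl⟩ := hb
  refine ⟨fun i j hij => ?_, fun i => ?_⟩
  · fin_cases i <;> fin_cases j <;> simp_all
  · fin_cases i <;> simp

theorem isUnitLowerTriangular_of_mem_lowerN {a : Matrix (Fin 3) (Fin 3) F}
    (ha : a ∈ lowerN F σ) : a.IsUnitLowerTriangular :=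
  ⟨fun _ _ hij => ha.2.2 _ _ hij, ha.2.1⟩

theorem torusT_factor_eq_of_adiag3_conj_eq {ϖ : F} (hϖ : ϖ ≠ 0)
    {b t a a₁ t₁ b₁ : Matrix (Fin 3) (Fin 3) F}
    (hb : b ∈ upperN F σ) (ht : t ∈ torusT F σ) (ha : a ∈ lowerN F σ)
    (ha₁ : a₁ ∈ lowerN F σ) (ht₁ : t₁ ∈ torusT F σ) (hb₁ : b₁ ∈ upperN F σ)
    (h : adiag3 ϖ 1 ϖ⁻¹ * (b * t * a) * adiag3 ϖ 1 ϖ⁻¹ = a₁ * t₁ * b₁) :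
    t₁ = adiag3 1 1 1 * t * adiag3 1 1 1 := by
  obtain ⟨d, rfl⟩ := exists_diagonal_of_mem_torusT σ ht
  obtain ⟨d₁, rfl⟩ := exists_diagonal_of_mem_torusT σ ht₁
  rw [mul_mul_conj_of_mul_self_eq_one (adiag3_mul_adiag3_self hϖ),
    adiag3_mul_diagonal_mul_adiag3 hϖ] at h
  have hd := diagonal_eq_of_lower_mul_diagonal_mul_upper
    ((isUnitUpperTriangular_of_mem_upperN σ hb).adiag3_conj hϖ)
    (isUnitLowerTriangular_of_mem_lowerN σ ha₁)
    ((isUnitLowerTriangular_of_mem_lowerN σ ha).adiag3_conj hϖ)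
    (isUnitUpperTriangular_of_mem_upperN σ hb₁) h
  -- `w_x` is `w_y` at `ϖ = 1`
  have hconj_one := adiag3_mul_diagonal_mul_adiag3 (one_ne_zero' F) d
  rw [inv_one] at hconj_one
  rw [← hd, hconj_one]

end

theorem intertwined_wx_implies_wy_general
    {F k : Type*} [Field F] [Field k] (σ : F ≃+* F)
    (ϖ : F) (hϖ : ϖ ≠ 0)
    (J : Set (Matrix (Fin 3) (Fin 3) F))
    (hJmul : ∀ a ∈ J, ∀ b ∈ J, a * b ∈ J)
    (lam : Matrix (Fin 3) (Fin 3) F → kˣ)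
    (hmul : ∀ a ∈ J, ∀ b ∈ J, lam (a * b) = lam a * lam b)
    (htrN : ∀ n ∈ J ∩ upperN F σ, lam n = 1)
    (htrNbar : ∀ n ∈ J ∩ lowerN F σ, lam n = 1)
    (hex : ∀ j ∈ J, ∃ a ∈ J ∩ lowerN F σ, ∃ t ∈ J ∩ torusT F σ,
        ∃ b ∈ J ∩ upperN F σ, j = a * t * b)
    (hex' : ∀ j ∈ J, ∃ b ∈ J ∩ upperN F σ, ∃ t ∈ J ∩ torusT F σ,
        ∃ a ∈ J ∩ lowerN F σ, j = b * t * a)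
    (hwx : ∀ j ∈ J, adiag3 (1 : F) 1 1 * j * adiag3 (1 : F) 1 1 ∈ J →
        lam j = lam (adiag3 (1 : F) 1 1 * j * adiag3 (1 : F) 1 1)) :
    ∀ j ∈ J, adiag3 ϖ 1 ϖ⁻¹ * j * adiag3 ϖ 1 ϖ⁻¹ ∈ J →
      lam j = lam (adiag3 ϖ 1 ϖ⁻¹ * j * adiag3 ϖ 1 ϖ⁻¹) := by
  intro j hj hjw
  obtain ⟨b, ⟨hbJ, hbN⟩, t, ⟨htJ, htT⟩, a, ⟨haJ, haN⟩, rfl⟩ := hex' j hj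
  obtain ⟨a₁, ⟨ha₁J, ha₁N⟩, t₁, ⟨ht₁J, ht₁T⟩, b₁, ⟨hb₁J, hb₁N⟩, hdec⟩ := hex _ hjw
  have ht₁ : t₁ = adiag3 1 1 1 * t * adiag3 1 1 1 :=
    torusT_factor_eq_of_adiag3_conj_eq σ hϖ hbN htT haN ha₁N ht₁T hb₁N hdec
  calc lam (b * t * a) = lam t :=
        map_mul_mul_eq_of_eq_one hmul hJmul hbJ htJ haJ (htrN b ⟨hbJ, hbN⟩)
          (htrNbar a ⟨haJ, haN⟩)
    _ = lam t₁ := ht₁ ▸ hwx t htJ (ht₁ ▸ ht₁J)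
    _ = lam (a₁ * t₁ * b₁) :=
        (map_mul_mul_eq_of_eq_one hmul hJmul ha₁J ht₁J hb₁J (htrNbar a₁ ⟨ha₁J, ha₁N⟩)
          (htrN b₁ ⟨hb₁J, hb₁N⟩)).symm
    _ = _ := by rw [hdec]

/-- If a character `λ` of a subgroup `J` of `U(2,1)(F/F₀)` admitting a unique
Iwahori decomposition `J = (J∩N̄)(J∩T)(J∩N)` (trivial on `J∩N` and `J∩N̄`) is
intertwined by `w_x = adiag(1,1,1)`, then it is intertwined by
`w_y = adiag(ϖ,1,ϖ⁻¹)`. -/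
theorem intertwined_wx_implies_wy
    {F k : Type*} [Field F] [Field k] (σ : F ≃+* F) (hσ : ∀ x, σ (σ x) = x)
    (ϖ : F) (hϖ : ϖ ≠ 0) (hσϖ : σ ϖ = ϖ)
    (J : Set (Matrix (Fin 3) (Fin 3) F)) (hJU : J ⊆ U21 F σ)
    (hJmul : ∀ a ∈ J, ∀ b ∈ J, a * b ∈ J)
    (lam : Matrix (Fin 3) (Fin 3) F → kˣ)
    (hmul : ∀ a ∈ J, ∀ b ∈ J, lam (a * b) = lam a * lam b)
    (htrN : ∀ n ∈ J ∩ upperN F σ, lam n = 1)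
    (htrNbar : ∀ n ∈ J ∩ lowerN F σ, lam n = 1)
    (hex : ∀ j ∈ J, ∃ a ∈ J ∩ lowerN F σ, ∃ t ∈ J ∩ torusT F σ,
        ∃ b ∈ J ∩ upperN F σ, j = a * t * b)
    (hex' : ∀ j ∈ J, ∃ b ∈ J ∩ upperN F σ, ∃ t ∈ J ∩ torusT F σ,
        ∃ a ∈ J ∩ lowerN F σ, j = b * t * a)
    (huniq : ∀ a ∈ lowerN F σ, ∀ t ∈ torusT F σ, ∀ b ∈ upperN F σ,
        ∀ a' ∈ lowerN F σ, ∀ t' ∈ torusT F σ, ∀ b' ∈ upperN F σ,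
        a * t * b = a' * t' * b' → a = a' ∧ t = t' ∧ b = b')
    (hwx : ∀ j ∈ J, adiag3 (1 : F) 1 1 * j * adiag3 (1 : F) 1 1 ∈ J →
        lam j = lam (adiag3 (1 : F) 1 1 * j * adiag3 (1 : F) 1 1)) :
    ∀ j ∈ J, adiag3 ϖ 1 ϖ⁻¹ * j * adiag3 ϖ 1 ϖ⁻¹ ∈ J →
      lam j = lam (adiag3 ϖ 1 ϖ⁻¹ * j * adiag3 ϖ 1 ϖ⁻¹) :=
  intertwined_wx_implies_wy_general σ ϖ hϖ J hJmul lam hmul htrN htrNbar hex hex' hwx
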